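/- arXiv:2303.02341 — 3 statements merged into one kernel-verified Lean document; each statement's English description precedes it below -/
import Mathlib

section
/- Let R(f) = π_S·E_S[g_f(1)] + π_D·E_D[g_f(-1)] be the noise-free SD risk and suppose g_f(1)+g_f(-1)=K pointwise for every f. Then the noisy risk under uniform noise with rate η satisfies R^η(f) = ηK + (1-2η)·R(f), where R^η(f) = π_S^η(η·E_D[g_f(1)] + (1-η)E_S[g_f(1)]) + π_D^η(η·E_S[g_f(-1)] + (1-η)E_D[g_f(-1)]), with π_S^η = (1-η)π_S + ηπ_D and π_D^η = ηπ_S + (1-η)π_D. -/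
open Finset

/-- In a finite setting, if `g_f(1) + g_f(-1) = K` pointwise for every `f`,
then the noisy risk under uniform noise with rate η satisfies
`R^η(f) = ηK + (1-2η)·R(f)`. -/
theorem uniform_noisy_risk_affine
    {α F : Type*} [Fintype α]
    (pS pD : α → ℝ)
    (hpS : ∀ x, 0 ≤ pS x) (hpD : ∀ x, 0 ≤ pD x)
    (hS1 : ∑ x, pS x = 1) (hD1 : ∑ x, pD x = 1)
    (K πS πD η : ℝ)
    (hπS : 0 ≤ πS) (hπD : 0 ≤ πD) (hπ : πS + πD = 1) (hη : 0 ≤ η)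
    (g1 gm1 : F → α → ℝ)
    (hg1 : ∀ f x, 0 ≤ g1 f x) (hgm1 : ∀ f x, 0 ≤ gm1 f x)
    (hsum : ∀ f x, g1 f x + gm1 f x = K) :
    ∀ f : F,
      ((1 - η) * πS + η * πD) *
          (η * (∑ x, pD x * g1 f x) + (1 - η) * (∑ x, pS x * g1 f x)) +
        (η * πS + (1 - η) * πD) *
          (η * (∑ x, pS x * gm1 f x) + (1 - η) * (∑ x, pD x * gm1 f x)) =
      η * K + (1 - 2 * η) *
          (πS * (∑ x, pS x * g1 f x) + πD * (∑ x, pD x * gm1 f x)) := by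
  intro f
  have hD : (∑ x, pD x * g1 f x) + (∑ x, pD x * gm1 f x) = K := by
    rw [← Finset.sum_add_distrib]
    calc (∑ x, (pD x * g1 f x + pD x * gm1 f x)) = ∑ x, pD x * K := by
          refine Finset.sum_congr rfl fun x _ => ?_
          rw [← mul_add, hsum]
      _ = K := by rw [← Finset.sum_mul, hD1, one_mul]
  have hSsum : (∑ x, pS x * g1 f x) + (∑ x, pS x * gm1 f x) = K := by
    rw [← Finset.sum_add_distrib]
    calc (∑ x, (pS x * g1 f x + pS x * gm1 f x)) = ∑ x, pS x * K := by
          refine Finset.sum_congr rfl fun x _ => ?_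
          rw [← mul_add, hsum]
      _ = K := by rw [← Finset.sum_mul, hS1, one_mul]
  set A := ∑ x, pS x * g1 f x
  set B := ∑ x, pD x * gm1 f x
  have h1 : (∑ x, pD x * g1 f x) = K - B := by linarith
  have h2 : (∑ x, pS x * gm1 f x) = K - A := by linarith
  rw [h1, h2]
  have hπD' : πD = 1 - πS := by linarith
  rw [hπD']
  ring
end

section
/- Let η_S, η_D ∈ [0,1), π_S, π_D > 0 with π_S+π_D=1, and let π_S^η = (1-η_S)π_S + η_D·π_D, π_D^η = η_S·π_S + (1-η_D)π_D, and C = π_S^η·((1-η_S)π_D + η_D·π_S) / (π_D^η·(η_S·π_D + (1-η_D)π_S)). Then ((1-η_S)π_S^η - η_S·π_D^η·C)/π_S = ((1-η_D)π_D^η·C - η_D·π_S^η)/π_D. -/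
/-! The defining equation of `C` says `πDη C (ηS πD + (1 - ηD) πS) = πSη ((1 - ηS) πD + ηD πS)`;
cross-multiplying the claimed identity by `πS πD` gives exactly the difference of the two sides
of this equation. -/

theorem cross_mul_eq_of_scaling_balance {K : Type*} [CommRing K] (ηS ηD πS πD A B C : K)
    (hbal : B * C * (ηS * πD + (1 - ηD) * πS) = A * ((1 - ηS) * πD + ηD * πS)) :
    ((1 - ηS) * A - ηS * B * C) * πD = ((1 - ηD) * B * C - ηD * A) * πS := by
  linear_combination -hbal

theorem conditional_noise_coeffs_equal_general
    (ηS ηD πS πD : ℝ)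
    (hS : 0 < πS) (hD : 0 < πD)
    (πSη πDη C : ℝ)
    (hden : πDη * (ηS * πD + (1 - ηD) * πS) ≠ 0)
    (hC : C = πSη * ((1 - ηS) * πD + ηD * πS) / (πDη * (ηS * πD + (1 - ηD) * πS))) :
    ((1 - ηS) * πSη - ηS * πDη * C) / πS =
      ((1 - ηD) * πDη * C - ηD * πSη) / πD := by
  have hbal : πDη * C * (ηS * πD + (1 - ηD) * πS) = πSη * ((1 - ηS) * πD + ηD * πS) :=
    calc πDη * C * (ηS * πD + (1 - ηD) * πS) = C * (πDη * (ηS * πD + (1 - ηD) * πS)) := by ring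
      _ = πSη * ((1 - ηS) * πD + ηD * πS) := by rw [hC, div_mul_cancel₀ _ hden]
  rw [div_eq_div_iff hS.ne' hD.ne']
  exact cross_mul_eq_of_scaling_balance ηS ηD πS πD πSη πDη C hbal

/-- With SD-conditional noise rates `ηS, ηD ∈ [0,1)`, clean priors
`πS, πD > 0`, `πS+πD=1`, noisy priors `πSη, πDη` and scaling constant `C` as defined,
`((1-ηS)πSη - ηS·πDη·C)/πS = ((1-ηD)πDη·C - ηD·πSη)/πD`. -/
theorem conditional_noise_coeffs_equal
    (ηS ηD πS πD : ℝ)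
    (hηS : ηS ∈ Set.Ico (0 : ℝ) 1) (hηD : ηD ∈ Set.Ico (0 : ℝ) 1)
    (hS : 0 < πS) (hD : 0 < πD) (h1 : πS + πD = 1)
    (πSη πDη C : ℝ)
    (hSη : πSη = (1 - ηS) * πS + ηD * πD)
    (hDη : πDη = ηS * πS + (1 - ηD) * πD)
    (hden : πDη * (ηS * πD + (1 - ηD) * πS) ≠ 0)
    (hC : C = πSη * ((1 - ηS) * πD + ηD * πS) / (πDη * (ηS * πD + (1 - ηD) * πS))) :
    ((1 - ηS) * πSη - ηS * πDη * C) / πS =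
      ((1 - ηD) * πDη * C - ηD * πSη) / πD :=
  conditional_noise_coeffs_equal_general ηS ηD πS πD hS hD πSη πDη C hden hC
end

section
/- Combining the above: if g_f(1)+g_f(-1)=K pointwise for every f, η_S+η_D<1, π_S,π_D>0 sum to 1, π_S^η, π_D^η and C are as defined, then R̂^η(f) = (η_S π_D^η C + η_D π_S^η)K + λ·R(f) where λ = π_S^η(1-η_S-η_D)/(η_S π_D + (1-η_D)π_S) > 0 and R(f) = π_S E_S[g_f(1)] + π_D E_D[g_f(-1)]; hence minimizers of R̂^η and of R over F coincide. -/
open Finset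

/-- In the SD-conditional noise setting with `g_f(1)+g_f(-1)=K` pointwise,
`ηS+ηD<1`, clean priors `πS,πD>0` summing to 1, noisy priors and `C` as defined:
`R̂^η(f) = (ηS πDη C + ηD πSη)K + λ·R(f)` with
`λ = πSη(1-ηS-ηD)/(ηS πD + (1-ηD)πS) > 0`, and hence minimizers of `R̂^η` and of `R`
over `F` coincide. -/
theorem conditional_noise_robustness
    {α F : Type*} [Fintype α]
    (pS pD : α → ℝ)
    (hpS : ∀ x, 0 ≤ pS x) (hpD : ∀ x, 0 ≤ pD x)
    (hS1 : ∑ x, pS x = 1) (hD1 : ∑ x, pD x = 1)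
    (K ηS ηD πS πD : ℝ)
    (hηS : ηS ∈ Set.Ico (0 : ℝ) 1) (hηD : ηD ∈ Set.Ico (0 : ℝ) 1)
    (hηsum : ηS + ηD < 1)
    (hS : 0 < πS) (hD : 0 < πD) (h1 : πS + πD = 1)
    (πSη πDη C lam : ℝ)
    (hSη : πSη = (1 - ηS) * πS + ηD * πD)
    (hDη : πDη = ηS * πS + (1 - ηD) * πD)
    (hC : C = πSη * ((1 - ηS) * πD + ηD * πS) / (πDη * (ηS * πD + (1 - ηD) * πS)))
    (hlam : lam = πSη * (1 - ηS - ηD) / (ηS * πD + (1 - ηD) * πS))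
    (g1 gm1 : F → α → ℝ)
    (hsum : ∀ f x, g1 f x + gm1 f x = K)
    (R Rη : F → ℝ)
    (hR : ∀ f, R f = πS * (∑ x, pS x * g1 f x) + πD * (∑ x, pD x * gm1 f x))
    (hRη : ∀ f, Rη f =
      ηS * πDη * (∑ x, pS x * (C * gm1 f x)) +
        (1 - ηS) * πSη * (∑ x, pS x * g1 f x) +
        ηD * πSη * (∑ x, pD x * g1 f x) +
        (1 - ηD) * πDη * (∑ x, pD x * (C * gm1 f x))) :
    (∀ f, Rη f = (ηS * πDη * C + ηD * πSη) * K + lam * R f) ∧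
      0 < lam ∧
      (∀ fstar : F, (∀ f, Rη fstar ≤ Rη f) ↔ (∀ f, R fstar ≤ R f)) := by
  obtain ⟨hηS0, hηS1⟩ := hηS
  obtain ⟨hηD0, hηD1⟩ := hηD
  have h1D : 0 < 1 - ηD := by linarith
  have h1S : 0 < 1 - ηS := by linarith
  have hD0pos : 0 < ηS * πD + (1 - ηD) * πS := by nlinarith
  have hD0 : ηS * πD + (1 - ηD) * πS ≠ 0 := ne_of_gt hD0pos
  have hπDηpos : 0 < πDη := by rw [hDη]; nlinarith
  have hπSηpos : 0 < πSη := by rw [hSη]; nlinarith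
  have hπDη : πDη ≠ 0 := ne_of_gt hπDηpos
  have hlampos : 0 < lam := by
    rw [hlam]
    have : 0 < 1 - ηS - ηD := by linarith
    positivity
  -- key scalar identities
  have e1 : (1 - ηS) * πSη - ηS * πDη * C = lam * πS := by
    rw [hC, hlam]
    field_simp
    ring
  have e2 : (1 - ηD) * πDη * C - ηD * πSη = lam * πD := by
    rw [hC, hlam]
    field_simp
    ring
  have key : ∀ f, Rη f = (ηS * πDη * C + ηD * πSη) * K + lam * R f := by
    intro f
    have hSgm : ∑ x, pS x * gm1 f x = K - ∑ x, pS x * g1 f x := by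
      have : ∑ x, (pS x * g1 f x + pS x * gm1 f x) = K := by
        calc ∑ x, (pS x * g1 f x + pS x * gm1 f x)
            = ∑ x, pS x * K := by
              refine Finset.sum_congr rfl fun x _ => ?_
              rw [← mul_add, hsum]
          _ = K := by rw [← Finset.sum_mul, hS1, one_mul]
      rw [Finset.sum_add_distrib] at this
      linarith
    have hDg1 : ∑ x, pD x * g1 f x = K - ∑ x, pD x * gm1 f x := by
      have : ∑ x, (pD x * g1 f x + pD x * gm1 f x) = K := by
        calc ∑ x, (pD x * g1 f x + pD x * gm1 f x)
            = ∑ x, pD x * K := by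
              refine Finset.sum_congr rfl fun x _ => ?_
              rw [← mul_add, hsum]
          _ = K := by rw [← Finset.sum_mul, hD1, one_mul]
      rw [Finset.sum_add_distrib] at this
      linarith
    have hCS : ∑ x, pS x * (C * gm1 f x) = C * ∑ x, pS x * gm1 f x := by
      rw [Finset.mul_sum]; exact Finset.sum_congr rfl fun x _ => by ring
    have hCD : ∑ x, pD x * (C * gm1 f x) = C * ∑ x, pD x * gm1 f x := by
      rw [Finset.mul_sum]; exact Finset.sum_congr rfl fun x _ => by ring
    rw [hRη, hR, hCS, hCD, hSgm, hDg1]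
    set A := ∑ x, pS x * g1 f x
    set B := ∑ x, pD x * gm1 f x
    linear_combination A * e1 + B * e2
  refine ⟨key, hlampos, fun fstar => ?_⟩
  constructor
  · intro h f
    have := h f
    rw [key, key] at this
    have := (add_le_add_iff_left _).mp this
    exact le_of_mul_le_mul_left this hlampos
  · intro h f
    rw [key, key]
    have := h f
    nlinarith [hlampos]
end
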